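/- arXiv:1307.0800 — 4 statements merged into one kernel-verified Lean document; each statement's English description precedes it below -/
import Mathlib

section
/- Let T ≥ 1 and for each t ∈ {1,…,T} let C_t : ℝ → ℝ be convex with C_t(0) = 0. For a vector S = (S_0,…,S_T) let x_t(S) = S_t − S_{t−1}. Suppose S* = (S*_0,…,S*_T) is feasible (i.e. 0 ≤ S*_t ≤ E for 1 ≤ t ≤ T−1) and there exists μ* = (μ*_1,…,μ*_T) such that: (ii) for each t, x_t(S*) minimises C_t(x) − μ*_t x over all x ∈ ℝ; and (iii) for 1 ≤ t ≤ T−1: μ*_{t+1} = μ*_t if 0 < S*_t < E, μ*_{t+1} ≤ μ*_t if S*_t = 0, and μ*_{t+1} ≥ μ*_t if S*_t = E. Then for every feasible S with S_0 = S*_0 and S_T = S*_T, one has ∑_{t=1}^T C_t(x_t(S*)) ≤ ∑_{t=1}^T C_t(x_t(S)). -/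
/-!
Lagrangian sufficiency. By (ii), each term satisfies
`C_t(x_t(S*)) ≤ C_t(x_t(S)) - μ*_t (x_t(S) - x_t(S*))`, so it suffices that the total payment
`∑ μ*_t (x_t(S) - x_t(S*))` is nonnegative. With `d = S - S*`, which vanishes at `0` and `T`,
summation by parts turns it into `-∑ (μ*_{t+1} - μ*_t) d_t`, and complementary slackness (iii)
makes every term of the last sum nonpositive: the price can only fall where the store is empty
(so `d_t ≥ 0`) and only rise where it is full (so `d_t ≤ 0`).
-/

open Finset

theorem sum_Icc_mul_sub_eq (μ d : ℕ → ℝ) (n : ℕ) :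
    ∑ t ∈ Icc 1 n, μ t * (d t - d (t - 1)) =
      μ (n + 1) * d n - μ 1 * d 0 - ∑ t ∈ Icc 1 n, (μ (t + 1) - μ t) * d t := by
  induction n with
  | zero => simp
  | succ n ih =>
    rw [sum_Icc_succ_top (by omega), sum_Icc_succ_top (by omega), ih, Nat.add_sub_cancel]
    ring

theorem mul_sub_nonpos_of_complementary_slackness {E s₀ s μ μ' : ℝ}
    (hs₀ : 0 ≤ s₀ ∧ s₀ ≤ E) (hs : 0 ≤ s ∧ s ≤ E)
    (hcs : (0 < s₀ ∧ s₀ < E → μ' = μ) ∧ (s₀ = 0 → μ' ≤ μ) ∧ (s₀ = E → μ ≤ μ')) :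
    (μ' - μ) * (s - s₀) ≤ 0 := by
  obtain ⟨hinterior, hempty, hfull⟩ := hcs
  rcases hs₀.1.eq_or_lt with h0 | h0
  · exact mul_nonpos_of_nonpos_of_nonneg (by linarith [hempty h0.symm]) (by linarith)
  rcases hs₀.2.eq_or_lt with hE | hE
  · exact mul_nonpos_of_nonneg_of_nonpos (by linarith [hfull hE]) (by linarith)
  · simp [hinterior ⟨h0, hE⟩]

theorem lagrangian_sufficiency_general
    (T : ℕ) (E : ℝ)
    (C : ℕ → ℝ → ℝ)
    (Sstar μstar : ℕ → ℝ)
    (hfeas : ∀ t, 1 ≤ t → t ≤ T - 1 → 0 ≤ Sstar t ∧ Sstar t ≤ E)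
    (hmin : ∀ t, 1 ≤ t → t ≤ T → ∀ x : ℝ,
      C t (Sstar t - Sstar (t - 1)) - μstar t * (Sstar t - Sstar (t - 1)) ≤
        C t x - μstar t * x)
    (hcs : ∀ t, 1 ≤ t → t ≤ T - 1 →
      (0 < Sstar t ∧ Sstar t < E → μstar (t + 1) = μstar t) ∧
      (Sstar t = 0 → μstar (t + 1) ≤ μstar t) ∧
      (Sstar t = E → μstar t ≤ μstar (t + 1)))
    (S : ℕ → ℝ)
    (hS0 : S 0 = Sstar 0) (hST : S T = Sstar T)
    (hSfeas : ∀ t, 1 ≤ t → t ≤ T - 1 → 0 ≤ S t ∧ S t ≤ E) :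
    ∑ t ∈ Finset.Icc 1 T, C t (Sstar t - Sstar (t - 1)) ≤
      ∑ t ∈ Finset.Icc 1 T, C t (S t - S (t - 1)) := by
  set d : ℕ → ℝ := fun t => S t - Sstar t with hd
  have hslack : ∀ t ∈ Icc 1 T, (μstar (t + 1) - μstar t) * d t ≤ 0 := by
    intro t ht
    obtain ⟨h1, hle⟩ := mem_Icc.1 ht
    rcases hle.lt_or_eq with hlt | rfl
    · exact mul_sub_nonpos_of_complementary_slackness (hfeas t h1 (by omega))
        (hSfeas t h1 (by omega)) (hcs t h1 (by omega))
    · simp [hd, hST]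
  have hpayment : 0 ≤ ∑ t ∈ Icc 1 T, μstar t * (d t - d (t - 1)) := by
    rw [sum_Icc_mul_sub_eq, show d 0 = 0 from sub_eq_zero.2 hS0,
      show d T = 0 from sub_eq_zero.2 hST]
    linarith [sum_nonpos hslack]
  calc ∑ t ∈ Icc 1 T, C t (Sstar t - Sstar (t - 1))
      ≤ ∑ t ∈ Icc 1 T, (C t (S t - S (t - 1)) - μstar t * (d t - d (t - 1))) := by
        refine sum_le_sum fun t ht => ?_
        have := hmin t (mem_Icc.1 ht).1 (mem_Icc.1 ht).2 (S t - S (t - 1))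
        simp only [hd]
        linarith
    _ = ∑ t ∈ Icc 1 T, C t (S t - S (t - 1)) - ∑ t ∈ Icc 1 T, μstar t * (d t - d (t - 1)) :=
        sum_sub_distrib ..
    _ ≤ ∑ t ∈ Icc 1 T, C t (S t - S (t - 1)) := sub_le_self _ hpayment

/-- Lagrangian sufficiency theorem for the storage arbitrage problem P. -/
theorem lagrangian_sufficiency
    (T : ℕ) (hT : 1 ≤ T) (E : ℝ)
    (C : ℕ → ℝ → ℝ)
    (hconv : ∀ t, 1 ≤ t → t ≤ T → ConvexOn ℝ Set.univ (C t))
    (hC0 : ∀ t, 1 ≤ t → t ≤ T → C t 0 = 0)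
    (Sstar μstar : ℕ → ℝ)
    (hfeas : ∀ t, 1 ≤ t → t ≤ T - 1 → 0 ≤ Sstar t ∧ Sstar t ≤ E)
    (hmin : ∀ t, 1 ≤ t → t ≤ T → ∀ x : ℝ,
      C t (Sstar t - Sstar (t - 1)) - μstar t * (Sstar t - Sstar (t - 1)) ≤
        C t x - μstar t * x)
    (hcs : ∀ t, 1 ≤ t → t ≤ T - 1 →
      (0 < Sstar t ∧ Sstar t < E → μstar (t + 1) = μstar t) ∧
      (Sstar t = 0 → μstar (t + 1) ≤ μstar t) ∧
      (Sstar t = E → μstar t ≤ μstar (t + 1)))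
    (S : ℕ → ℝ)
    (hS0 : S 0 = Sstar 0) (hST : S T = Sstar T)
    (hSfeas : ∀ t, 1 ≤ t → t ≤ T - 1 → 0 ≤ S t ∧ S t ≤ E) :
    ∑ t ∈ Finset.Icc 1 T, C t (Sstar t - Sstar (t - 1)) ≤
      ∑ t ∈ Finset.Icc 1 T, C t (S t - S (t - 1)) :=
  lagrangian_sufficiency_general T E C Sstar μstar hfeas hmin hcs S hS0 hST hSfeas
end

section
/- Let T ≥ 1, C_t : ℝ → ℝ convex for each t, and let S, S* ∈ ℝ^{T+1} agree at times 0 and T. If μ* ∈ ℝ^T satisfies that x_t(S*) minimises C_t(x) − μ*_t x for each t, then ∑_{t=1}^T C_t(x_t(S*)) − ∑_{t=1}^T C_t(x_t(S)) ≤ ∑_{t=1}^{T−1} (S*_t − S_t)(μ*_t − μ*_{t+1}). -/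
/-! Each `x_t(S*)` minimises `C_t(x) - μ*_t x`, so comparing with `x = x_t(S)` bounds the cost
difference at time `t` by `μ*_t (x_t(S*) - x_t(S))`. Summing by parts against the increments of
`S* - S`, which vanishes at times `0` and `T`, turns the total into the right-hand side. -/

namespace Finset

variable {R : Type*} [CommRing R] (μ a : ℕ → R)

theorem sum_Icc_mul_sub_pred_eq (ha₀ : a 0 = 0) (n : ℕ) :
    ∑ t ∈ Icc 1 (n + 1), μ t * (a t - a (t - 1)) =
      ∑ t ∈ Icc 1 n, a t * (μ t - μ (t + 1)) + μ (n + 1) * a (n + 1) := by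
  induction n with
  | zero => simp [ha₀]
  | succ n ih =>
    rw [sum_Icc_succ_top (by omega), ih, sum_Icc_succ_top (by omega), Nat.add_sub_cancel]
    ring

theorem sum_Icc_mul_sub_pred_eq_of_eq_zero {T : ℕ} (ha₀ : a 0 = 0) (haT : a T = 0) :
    ∑ t ∈ Icc 1 T, μ t * (a t - a (t - 1)) = ∑ t ∈ Icc 1 (T - 1), a t * (μ t - μ (t + 1)) := by
  cases T with
  | zero => simp
  | succ n => rw [sum_Icc_mul_sub_pred_eq μ a ha₀, haT, mul_zero, add_zero, Nat.add_sub_cancel]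

end Finset

theorem summation_by_parts_bound_general
    (T : ℕ)
    (C : ℕ → ℝ → ℝ)
    (S Sstar μstar : ℕ → ℝ)
    (hS0 : S 0 = Sstar 0) (hST : S T = Sstar T)
    (hmin : ∀ t, 1 ≤ t → t ≤ T → ∀ x : ℝ,
      C t (Sstar t - Sstar (t - 1)) - μstar t * (Sstar t - Sstar (t - 1)) ≤
        C t x - μstar t * x) :
    ∑ t ∈ Finset.Icc 1 T, C t (Sstar t - Sstar (t - 1)) -
        ∑ t ∈ Finset.Icc 1 T, C t (S t - S (t - 1)) ≤
      ∑ t ∈ Finset.Icc 1 (T - 1), (Sstar t - S t) * (μstar t - μstar (t + 1)) := by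
  calc _ = ∑ t ∈ Finset.Icc 1 T, (C t (Sstar t - Sstar (t - 1)) - C t (S t - S (t - 1))) :=
        (Finset.sum_sub_distrib _ _).symm
    _ ≤ ∑ t ∈ Finset.Icc 1 T,
          μstar t * ((Sstar t - S t) - (Sstar (t - 1) - S (t - 1))) := by
        refine Finset.sum_le_sum fun t ht => ?_
        have hmin_t := hmin t (Finset.mem_Icc.1 ht).1 (Finset.mem_Icc.1 ht).2 (S t - S (t - 1))
        linarith
    _ = _ := Finset.sum_Icc_mul_sub_pred_eq_of_eq_zero μstar (fun t => Sstar t - S t)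
        (by simp [hS0]) (by simp [hST])

/-- Summation-by-parts inequality used in the Lagrangian sufficiency proof. -/
theorem summation_by_parts_bound
    (T : ℕ) (hT : 1 ≤ T)
    (C : ℕ → ℝ → ℝ)
    (hconv : ∀ t, 1 ≤ t → t ≤ T → ConvexOn ℝ Set.univ (C t))
    (S Sstar μstar : ℕ → ℝ)
    (hS0 : S 0 = Sstar 0) (hST : S T = Sstar T)
    (hmin : ∀ t, 1 ≤ t → t ≤ T → ∀ x : ℝ,
      C t (Sstar t - Sstar (t - 1)) - μstar t * (Sstar t - Sstar (t - 1)) ≤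
        C t x - μstar t * x) :
    ∑ t ∈ Finset.Icc 1 T, C t (Sstar t - Sstar (t - 1)) -
        ∑ t ∈ Finset.Icc 1 T, C t (S t - S (t - 1)) ≤
      ∑ t ∈ Finset.Icc 1 (T - 1), (Sstar t - S t) * (μstar t - μstar (t + 1)) :=
  summation_by_parts_bound_general T C S Sstar μstar hS0 hST hmin
end

section
/- Suppose each x*_t : ℝ → ℝ is monotone increasing and continuous, and S_t(μ) = S_0 + ∑_{u=1}^t x*_u(μ). If M (the set of μ whose trajectory first violates the constraints from below, as defined in the algorithm) is nonempty and bounded above with supremum μ̄, and if μ̄ ∈ M with first violation time T'(μ̄), then there exists t < T'(μ̄) with S_t(μ̄) = E. -/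
/-- The trajectory of store levels at constant reference price μ. -/
def storeTraj (xstar : ℕ → ℝ → ℝ) (S₀ : ℝ) (t : ℕ) (μ : ℝ) : ℝ :=
  S₀ + ∑ u ∈ Finset.Icc 1 t, xstar u μ

/-- M : the set of μ whose trajectory first violates the constraints from below. -/
def violatesBelow (xstar : ℕ → ℝ → ℝ) (S₀ E SstarT : ℝ) (T : ℕ) : Set ℝ :=
  {μ | ∃ T', 1 ≤ T' ∧ T' ≤ T ∧
    (∀ t, 1 ≤ t → t < T' → 0 ≤ storeTraj xstar S₀ t μ ∧ storeTraj xstar S₀ t μ ≤ E) ∧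
    (storeTraj xstar S₀ T' μ < 0 ∨ (T' = T ∧ storeTraj xstar S₀ T μ < SstarT))}

/-!
If the trajectory at `μbar` stayed strictly below `E` before its violation time `T'`, every
constraint that makes `μbar` a member of `M` would persist for slightly larger `μ`: the strict
upper bounds and the violation at `T'` are open conditions, by continuity, while the lower
bounds `0 ≤ S_t` can only improve, by monotonicity. Such a `μ > μbar` in `M` contradicts
`μbar = sup M`.
-/

open Filter Topology

section storeTraj

variable {xstar : ℕ → ℝ → ℝ} {S₀ : ℝ} {t : ℕ}

theorem storeTraj_monotone (hmono : ∀ u ∈ Finset.Icc 1 t, Monotone (xstar u)) :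
    Monotone (storeTraj xstar S₀ t) := fun _ _ hab =>
  add_le_add_right (Finset.sum_le_sum fun u hu => hmono u hu hab) _

theorem storeTraj_continuous (hcont : ∀ u ∈ Finset.Icc 1 t, Continuous (xstar u)) :
    Continuous (storeTraj xstar S₀ t) :=
  continuous_const.add (continuous_finsetSum _ hcont)

end storeTraj

theorem eventually_mem_violatesBelow {xstar : ℕ → ℝ → ℝ} {S₀ E SstarT μ : ℝ} {T T' : ℕ}
    (hmono : ∀ t, 1 ≤ t → t ≤ T → Monotone (xstar t))
    (hcont : ∀ t, 1 ≤ t → t ≤ T → Continuous (xstar t))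
    (hT'1 : 1 ≤ T') (hT'T : T' ≤ T)
    (hfeas : ∀ t, 1 ≤ t → t < T' →
      0 ≤ storeTraj xstar S₀ t μ ∧ storeTraj xstar S₀ t μ < E)
    (hviol : storeTraj xstar S₀ T' μ < 0 ∨ (T' = T ∧ storeTraj xstar S₀ T μ < SstarT)) :
    ∀ᶠ ν in 𝓝[≥] μ, ν ∈ violatesBelow xstar S₀ E SstarT T := by
  have hScont : ∀ t ≤ T, Continuous (storeTraj xstar S₀ t) := fun t ht =>
    storeTraj_continuous fun u hu =>
      hcont u (Finset.mem_Icc.mp hu).1 ((Finset.mem_Icc.mp hu).2.trans ht)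
  have hfeas' : ∀ t ∈ Finset.Ico 1 T', ∀ᶠ ν in 𝓝[≥] μ,
      0 ≤ storeTraj xstar S₀ t ν ∧ storeTraj xstar S₀ t ν ≤ E := by
    intro t ht
    obtain ⟨ht1, htT'⟩ := Finset.mem_Ico.mp ht
    have hSmono : Monotone (storeTraj xstar S₀ t) := storeTraj_monotone fun u hu =>
      hmono u (Finset.mem_Icc.mp hu).1 ((Finset.mem_Icc.mp hu).2.trans (htT'.le.trans hT'T))
    have hbelow : ∀ᶠ ν in 𝓝 μ, storeTraj xstar S₀ t ν < E :=
      (hScont t (htT'.le.trans hT'T)).continuousAt.eventually_lt continuousAt_const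
        (hfeas t ht1 htT').2
    filter_upwards [self_mem_nhdsWithin, nhdsWithin_le_nhds hbelow] with ν hμν hν
    exact ⟨(hfeas t ht1 htT').1.trans (hSmono hμν), hν.le⟩
  have hviol' : ∀ᶠ ν in 𝓝 μ,
      storeTraj xstar S₀ T' ν < 0 ∨ (T' = T ∧ storeTraj xstar S₀ T ν < SstarT) := by
    rcases hviol with hneg | ⟨rfl, hlow⟩
    · exact ((hScont T' hT'T).continuousAt.eventually_lt continuousAt_const hneg).mono
        fun _ => Or.inl
    · exact ((hScont T' le_rfl).continuousAt.eventually_lt continuousAt_const hlow).mono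
        fun _ h => Or.inr ⟨rfl, h⟩
  filter_upwards [(Finset.eventually_all _).mpr hfeas', nhdsWithin_le_nhds hviol']
    with ν hν hνviol
  exact ⟨T', hT'1, hT'T, fun t h1 h2 => hν t (Finset.mem_Ico.mpr ⟨h1, h2⟩), hνviol⟩

theorem sup_violatesBelow_touches_full_general
    (T : ℕ)
    (xstar : ℕ → ℝ → ℝ)
    (hmono : ∀ t, 1 ≤ t → t ≤ T → Monotone (xstar t))
    (hcont : ∀ t, 1 ≤ t → t ≤ T → Continuous (xstar t))
    (S₀ E SstarT : ℝ)
    (hbdd : BddAbove (violatesBelow xstar S₀ E SstarT T))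
    (μbar : ℝ) (hμbar : μbar = sSup (violatesBelow xstar S₀ E SstarT T))
    (T' : ℕ) (hT'1 : 1 ≤ T') (hT'T : T' ≤ T)
    (hfeas : ∀ t, 1 ≤ t → t < T' →
      0 ≤ storeTraj xstar S₀ t μbar ∧ storeTraj xstar S₀ t μbar ≤ E)
    (hviol : storeTraj xstar S₀ T' μbar < 0 ∨
      (T' = T ∧ storeTraj xstar S₀ T μbar < SstarT)) :
    ∃ t, 1 ≤ t ∧ t < T' ∧ storeTraj xstar S₀ t μbar = E := by
  by_contra! hnotFull
  have hstrict : ∀ t, 1 ≤ t → t < T' →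
      0 ≤ storeTraj xstar S₀ t μbar ∧ storeTraj xstar S₀ t μbar < E := fun t h1 h2 =>
    ⟨(hfeas t h1 h2).1, (hfeas t h1 h2).2.lt_of_ne (hnotFull t h1 h2)⟩
  have hnear := eventually_mem_violatesBelow hmono hcont hT'1 hT'T hstrict hviol
  have hright : ∀ᶠ ν in 𝓝[>] μbar, ν ∈ violatesBelow xstar S₀ E SstarT T :=
    nhdsWithin_mono _ Set.Ioi_subset_Ici_self hnear
  obtain ⟨ν, hνM, hμν⟩ := (hright.and self_mem_nhdsWithin).exists
  exact (le_csSup hbdd hνM).not_gt (hμbar ▸ hμν)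

/-- If the supremum μ̄ of M itself lies in M, with first-violation witness T',
then the trajectory at μ̄ must touch the full level E strictly before T'. -/
theorem sup_violatesBelow_touches_full
    (T : ℕ) (hT : 1 ≤ T)
    (xstar : ℕ → ℝ → ℝ)
    (hmono : ∀ t, 1 ≤ t → t ≤ T → Monotone (xstar t))
    (hcont : ∀ t, 1 ≤ t → t ≤ T → Continuous (xstar t))
    (S₀ E SstarT : ℝ) (hE : 0 < E)
    (hne : (violatesBelow xstar S₀ E SstarT T).Nonempty)
    (hbdd : BddAbove (violatesBelow xstar S₀ E SstarT T))
    (μbar : ℝ) (hμbar : μbar = sSup (violatesBelow xstar S₀ E SstarT T))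
    (T' : ℕ) (hT'1 : 1 ≤ T') (hT'T : T' ≤ T)
    (hfeas : ∀ t, 1 ≤ t → t < T' →
      0 ≤ storeTraj xstar S₀ t μbar ∧ storeTraj xstar S₀ t μbar ≤ E)
    (hviol : storeTraj xstar S₀ T' μbar < 0 ∨
      (T' = T ∧ storeTraj xstar S₀ T μbar < SstarT)) :
    ∃ t, 1 ≤ t ∧ t < T' ∧ storeTraj xstar S₀ t μbar = E :=
  sup_violatesBelow_touches_full_general T xstar hmono hcont S₀ E SstarT hbdd μbar hμbar T' hT'1
    hT'T hfeas hviol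
end

section
/- In the storage algorithm, suppose at stage i the supremum μ̄_i of M_i lies in M_i (case (b)), and the construction sets S*_t = S_t(μ̄_i) for T_i+1 ≤ t ≤ T_{i+1} where S_{T_{i+1}}(μ̄_i) = E. Then μ̄_i ∈ M_{i+1}, and consequently μ̄_{i+1} = sup M_{i+1} ≥ μ̄_i. -/
/-- Trajectory started at time t₀ from level s₀ and run at constant reference
price μ. -/
def stageTraj (xstar : ℕ → ℝ → ℝ) (t₀ : ℕ) (s₀ : ℝ) (t : ℕ) (μ : ℝ) : ℝ :=
  s₀ + ∑ u ∈ Finset.Icc (t₀ + 1) t, xstar u μ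

/-- The set of μ whose trajectory started at time t₀ from level s₀ first
violates the constraints from below. -/
def stageViolatesBelow (xstar : ℕ → ℝ → ℝ) (t₀ : ℕ) (s₀ E SstarT : ℝ) (T : ℕ) :
    Set ℝ :=
  {μ | ∃ T', t₀ + 1 ≤ T' ∧ T' ≤ T ∧
    (∀ t, t₀ + 1 ≤ t → t < T' →
      0 ≤ stageTraj xstar t₀ s₀ t μ ∧ stageTraj xstar t₀ s₀ t μ ≤ E) ∧
    (stageTraj xstar t₀ s₀ T' μ < 0 ∨
      (T' = T ∧ stageTraj xstar t₀ s₀ T μ < SstarT))}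

/-! Restarting the trajectory of price `μ̄ᵢ` at time `Tᵢ₊₁` from the level `E` it has reached
there reproduces the same trajectory afterwards, so the violation from below that put `μ̄ᵢ`
into `Mᵢ` also puts it into `Mᵢ₊₁`. -/

lemma stageTraj_restart (xstar : ℕ → ℝ → ℝ) {t₀ t₁ t : ℕ} (s₀ μ : ℝ) (h₀₁ : t₀ ≤ t₁)
    (h₁ : t₁ ≤ t) :
    stageTraj xstar t₁ (stageTraj xstar t₀ s₀ t₁ μ) t μ = stageTraj xstar t₀ s₀ t μ := by
  simp only [stageTraj, Finset.Icc_add_one_left_eq_Ioc]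
  rw [add_assoc, Finset.sum_Ioc_consecutive _ h₀₁ h₁]

lemma mem_stageViolatesBelow_restart {xstar : ℕ → ℝ → ℝ} {t₀ t₁ T' T : ℕ}
    {s₀ s₁ E SstarT μ : ℝ} (h₀₁ : t₀ ≤ t₁) (h₁T' : t₁ < T') (hT'T : T' ≤ T)
    (hfeas : ∀ t, t₀ + 1 ≤ t → t < T' →
      0 ≤ stageTraj xstar t₀ s₀ t μ ∧ stageTraj xstar t₀ s₀ t μ ≤ E)
    (hviol : stageTraj xstar t₀ s₀ T' μ < 0 ∨
      (T' = T ∧ stageTraj xstar t₀ s₀ T μ < SstarT))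
    (hs₁ : stageTraj xstar t₀ s₀ t₁ μ = s₁) :
    μ ∈ stageViolatesBelow xstar t₁ s₁ E SstarT T := by
  subst hs₁
  have hrestart : ∀ t, t₁ ≤ t → _ := fun t ht => stageTraj_restart xstar s₀ μ h₀₁ ht
  refine ⟨T', h₁T', hT'T, fun t ht₁ htT' => ?_, ?_⟩
  · rw [hrestart t (by omega)]
    exact hfeas t (by omega) htT'
  · rw [hrestart T' h₁T'.le, hrestart T (h₁T'.le.trans hT'T)]
    exact hviol

theorem sup_increases_after_full_general
    (T : ℕ) (E SstarT : ℝ)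
    (xstar : ℕ → ℝ → ℝ)
    (Ti : ℕ) (s₀ : ℝ) (μbar : ℝ)
    (T' : ℕ) (hT'T : T' ≤ T)
    (hfeas : ∀ t, Ti + 1 ≤ t → t < T' →
      0 ≤ stageTraj xstar Ti s₀ t μbar ∧ stageTraj xstar Ti s₀ t μbar ≤ E)
    (hviol : stageTraj xstar Ti s₀ T' μbar < 0 ∨
      (T' = T ∧ stageTraj xstar Ti s₀ T μbar < SstarT))
    (Ti1 : ℕ) (hTi1 : Ti + 1 ≤ Ti1) (hTi1T' : Ti1 < T')
    (hfull : stageTraj xstar Ti s₀ Ti1 μbar = E) :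
    μbar ∈ stageViolatesBelow xstar Ti1 E E SstarT T ∧
    (BddAbove (stageViolatesBelow xstar Ti1 E E SstarT T) →
      μbar ≤ sSup (stageViolatesBelow xstar Ti1 E E SstarT T)) := by
  have hmem : μbar ∈ stageViolatesBelow xstar Ti1 E E SstarT T :=
    mem_stageViolatesBelow_restart (by omega) hTi1T' hT'T hfeas hviol hfull
  exact ⟨hmem, fun hbdd => le_csSup hbdd hmem⟩

/-- Case (b) of the algorithm: if μ̄ᵢ = sup Mᵢ lies in Mᵢ with witness T' and the
trajectory reaches the full level E at a time Tᵢ₊₁ < T', then μ̄ᵢ ∈ Mᵢ₊₁ (the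
violation set for the stage started at time Tᵢ₊₁ from level E), and hence
μ̄ᵢ₊₁ = sup Mᵢ₊₁ ≥ μ̄ᵢ. -/
theorem sup_increases_after_full
    (T : ℕ) (hT : 1 ≤ T) (E SstarT : ℝ) (hE : 0 < E)
    (xstar : ℕ → ℝ → ℝ)
    (hmono : ∀ t, 1 ≤ t → t ≤ T → Monotone (xstar t))
    (hcont : ∀ t, 1 ≤ t → t ≤ T → Continuous (xstar t))
    (Ti : ℕ) (s₀ : ℝ) (μbar : ℝ)
    (hμbar : μbar = sSup (stageViolatesBelow xstar Ti s₀ E SstarT T))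
    (T' : ℕ) (hT'1 : Ti + 1 ≤ T') (hT'T : T' ≤ T)
    (hfeas : ∀ t, Ti + 1 ≤ t → t < T' →
      0 ≤ stageTraj xstar Ti s₀ t μbar ∧ stageTraj xstar Ti s₀ t μbar ≤ E)
    (hviol : stageTraj xstar Ti s₀ T' μbar < 0 ∨
      (T' = T ∧ stageTraj xstar Ti s₀ T μbar < SstarT))
    (Ti1 : ℕ) (hTi1 : Ti + 1 ≤ Ti1) (hTi1T' : Ti1 < T')
    (hfull : stageTraj xstar Ti s₀ Ti1 μbar = E) :
    μbar ∈ stageViolatesBelow xstar Ti1 E E SstarT T ∧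
    (BddAbove (stageViolatesBelow xstar Ti1 E E SstarT T) →
      μbar ≤ sSup (stageViolatesBelow xstar Ti1 E E SstarT T)) :=
  sup_increases_after_full_general T E SstarT xstar Ti s₀ μbar T' hT'T hfeas hviol Ti1 hTi1 hTi1T'
    hfull
end
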